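/- (Double sum partial summation bound.) Let M, N be positive integers, let a : {1,…,M}×{1,…,N} → ℂ and b : {1,…,M}×{1,…,N} → ℝ with 0 ≤ b(m,n) ≤ H, and suppose the differences b(m,n)−b(m+1,n), b(m,n)−b(m,n+1), and b(m,n)−b(m+1,n)−b(m,n+1)+b(m+1,n+1) are all nonnegative for all valid m,n. If |Σ_{μ=1}^{m} Σ_{ν=1}^{n} a(μ,ν)| ≤ G for all 1 ≤ m ≤ M, 1 ≤ n ≤ N, then |Σ_{m=1}^{M} Σ_{n=1}^{N} a(m,n) b(m,n)| ≤ 5 G H. -/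

import Mathlib

/-!
Extend `b` by zero outside the rectangle `[1, M] × [1, N]`. The hypotheses say exactly that the
mixed second differences `d(p, q)` of the extension are nonnegative on the rectangle, and
telescoping gives `b(m, n) = ∑_{p ≥ m, q ≥ n} d(p, q)`. Substituting this and exchanging the order
of summation writes `∑ a b` as `∑ d(p, q) A(p, q)`, with `A` the rectangular partial sums of `a`.
Hence `|∑ a b| ≤ G ∑ d = G b(1, 1) ≤ G H`.
-/

open Finset

theorem sum_Icc_sum_Icc_comm {β : Type*} [AddCommMonoid β] (K : ℕ) (g : ℕ → ℕ → β) :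
    ∑ i ∈ Icc 1 K, ∑ j ∈ Icc i K, g i j = ∑ j ∈ Icc 1 K, ∑ i ∈ Icc 1 j, g i j :=
  sum_comm' fun i j => by simp only [mem_Icc]; omega

section MixedDiff

variable {R : Type*}

def mixedDiff [AddCommGroup R] (f : ℕ → ℕ → R) (m n : ℕ) : R :=
  f m n - f (m + 1) n - f m (n + 1) + f (m + 1) (n + 1)

theorem sum_Icc_sum_Icc_mixedDiff [AddCommGroup R] (f : ℕ → ℕ → R) {m n M N : ℕ}
    (hm : m ≤ M) (hn : n ≤ N) :
    ∑ p ∈ Icc m M, ∑ q ∈ Icc n N, mixedDiff f p q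
      = f m n - f (M + 1) n - f m (N + 1) + f (M + 1) (N + 1) := by
  have inner (p : ℕ) : ∑ q ∈ Icc n N, mixedDiff f p q
      = (f (p + 1) (N + 1) - f (p + 1) n) - (f p (N + 1) - f p n) := by
    refine (sum_congr rfl fun q _ => ?_).trans
      ((sum_Icc_sub hn fun q => f (p + 1) q - f p q).trans ?_)
    · simp only [mixedDiff]
      abel
    · abel
  rw [sum_congr rfl fun p _ => inner p]
  refine (sum_Icc_sub hm fun p => f p (N + 1) - f p n).trans ?_
  abel

variable [Ring R] {E : Type*} [AddCommGroup E] [Module R E]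

theorem sum_Icc_sum_Icc_smul_eq_sum_mixedDiff_smul (a : ℕ → ℕ → E) (f : ℕ → ℕ → R) {M N : ℕ}
    (hfM : ∀ n, f (M + 1) n = 0) (hfN : ∀ m, f m (N + 1) = 0) :
    ∑ m ∈ Icc 1 M, ∑ n ∈ Icc 1 N, f m n • a m n
      = ∑ p ∈ Icc 1 M, ∑ q ∈ Icc 1 N,
          mixedDiff f p q • ∑ μ ∈ Icc 1 p, ∑ ν ∈ Icc 1 q, a μ ν := by
  calc ∑ m ∈ Icc 1 M, ∑ n ∈ Icc 1 N, f m n • a m n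
      = ∑ m ∈ Icc 1 M, ∑ n ∈ Icc 1 N, ∑ p ∈ Icc m M, ∑ q ∈ Icc n N,
          mixedDiff f p q • a m n := by
        refine sum_congr rfl fun m hm => sum_congr rfl fun n hn => ?_
        rw [mem_Icc] at hm hn
        simp only [← sum_smul, sum_Icc_sum_Icc_mixedDiff f hm.2 hn.2, hfM, hfN, sub_zero,
          add_zero]
    _ = ∑ p ∈ Icc 1 M, ∑ m ∈ Icc 1 p, ∑ q ∈ Icc 1 N, ∑ n ∈ Icc 1 q,
          mixedDiff f p q • a m n := by
        rw [← sum_Icc_sum_Icc_comm]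
        refine sum_congr rfl fun m _ => ?_
        rw [sum_comm]
        exact sum_congr rfl fun p _ => sum_Icc_sum_Icc_comm N _
    _ = ∑ p ∈ Icc 1 M, ∑ q ∈ Icc 1 N, ∑ m ∈ Icc 1 p, ∑ n ∈ Icc 1 q,
          mixedDiff f p q • a m n := sum_congr rfl fun p _ => sum_comm
    _ = _ := by simp only [smul_sum]

end MixedDiff

theorem norm_sum_Icc_sum_Icc_smul_le {E : Type*} [SeminormedAddCommGroup E] [NormedSpace ℝ E]
    (a : ℕ → ℕ → E) (f : ℕ → ℕ → ℝ) {M N : ℕ} {G : ℝ} (hM : 0 < M) (hN : 0 < N)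
    (hfM : ∀ n, f (M + 1) n = 0) (hfN : ∀ m, f m (N + 1) = 0)
    (hf : ∀ p ∈ Icc 1 M, ∀ q ∈ Icc 1 N, 0 ≤ mixedDiff f p q)
    (hG : ∀ m ∈ Icc 1 M, ∀ n ∈ Icc 1 N, ‖∑ μ ∈ Icc 1 m, ∑ ν ∈ Icc 1 n, a μ ν‖ ≤ G) :
    ‖∑ m ∈ Icc 1 M, ∑ n ∈ Icc 1 N, f m n • a m n‖ ≤ f 1 1 * G := by
  have mass : ∑ p ∈ Icc 1 M, ∑ q ∈ Icc 1 N, mixedDiff f p q = f 1 1 := by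
    simp only [sum_Icc_sum_Icc_mixedDiff f hM hN, hfM, hfN, sub_zero, add_zero]
  rw [sum_Icc_sum_Icc_smul_eq_sum_mixedDiff_smul a f hfM hfN, ← mass, sum_mul]
  refine (norm_sum_le _ _).trans (sum_le_sum fun p hp => ?_)
  rw [sum_mul]
  refine (norm_sum_le _ _).trans (sum_le_sum fun q hq => ?_)
  rw [norm_smul, Real.norm_of_nonneg (hf p hp q hq)]
  exact mul_le_mul_of_nonneg_left (hG p hp q hq) (hf p hp q hq)

def rectExt (M N : ℕ) (b : ℕ → ℕ → ℝ) (m n : ℕ) : ℝ :=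
  if m ≤ M ∧ n ≤ N then b m n else 0

theorem rectExt_of_le {M N m n : ℕ} (b : ℕ → ℕ → ℝ) (hm : m ≤ M) (hn : n ≤ N) :
    rectExt M N b m n = b m n :=
  if_pos ⟨hm, hn⟩

theorem mixedDiff_rectExt_nonneg {M N p q : ℕ} {b : ℕ → ℕ → ℝ} (hp : p ≤ M) (hq : q ≤ N)
    (h0 : 0 ≤ b p q) (h1 : 0 ≤ b p q - b (p + 1) q) (h2 : 0 ≤ b p q - b p (q + 1))
    (h3 : 0 ≤ b p q - b (p + 1) q - b p (q + 1) + b (p + 1) (q + 1)) :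
    0 ≤ mixedDiff (rectExt M N b) p q := by
  simp only [mixedDiff, rectExt]
  split_ifs <;> first | omega | linarith

/-- Titchmarsh's two-dimensional Abel summation inequality: if all rectangular
partial sums of `a` are bounded by `G`, and `0 ≤ b ≤ H` is nonincreasing in each
variable with nonnegative mixed second difference, then
`|Σ_{m=1}^M Σ_{n=1}^N a(m,n) b(m,n)| ≤ 5GH`. -/
theorem double_abel_summation (M N : ℕ) (hM : 0 < M) (hN : 0 < N)
    (a : ℕ → ℕ → ℂ) (b : ℕ → ℕ → ℝ) (G H : ℝ)
    (hb0 : ∀ m ∈ Icc 1 M, ∀ n ∈ Icc 1 N, 0 ≤ b m n)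
    (hbH : ∀ m ∈ Icc 1 M, ∀ n ∈ Icc 1 N, b m n ≤ H)
    (hb1 : ∀ m ∈ Icc 1 M, ∀ n ∈ Icc 1 N, 0 ≤ b m n - b (m + 1) n)
    (hb2 : ∀ m ∈ Icc 1 M, ∀ n ∈ Icc 1 N, 0 ≤ b m n - b m (n + 1))
    (hb3 : ∀ m ∈ Icc 1 M, ∀ n ∈ Icc 1 N,
      0 ≤ b m n - b (m + 1) n - b m (n + 1) + b (m + 1) (n + 1))
    (hG : ∀ m ∈ Icc 1 M, ∀ n ∈ Icc 1 N,
      ‖∑ μ ∈ Icc 1 m, ∑ ν ∈ Icc 1 n, a μ ν‖ ≤ G) :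
    ‖∑ m ∈ Icc 1 M, ∑ n ∈ Icc 1 N, a m n * (b m n : ℂ)‖ ≤ 5 * G * H := by
  have h1M : 1 ∈ Icc 1 M := mem_Icc.mpr ⟨le_rfl, hM⟩
  have h1N : 1 ∈ Icc 1 N := mem_Icc.mpr ⟨le_rfl, hN⟩
  have hsum : ∑ m ∈ Icc 1 M, ∑ n ∈ Icc 1 N, a m n * (b m n : ℂ)
      = ∑ m ∈ Icc 1 M, ∑ n ∈ Icc 1 N, rectExt M N b m n • a m n :=
    sum_congr rfl fun m hm => sum_congr rfl fun n hn => by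
      rw [rectExt_of_le b (mem_Icc.mp hm).2 (mem_Icc.mp hn).2, Complex.real_smul, mul_comm]
  have hf : ∀ p ∈ Icc 1 M, ∀ q ∈ Icc 1 N, 0 ≤ mixedDiff (rectExt M N b) p q :=
    fun p hp q hq => mixedDiff_rectExt_nonneg (mem_Icc.mp hp).2 (mem_Icc.mp hq).2
      (hb0 p hp q hq) (hb1 p hp q hq) (hb2 p hp q hq) (hb3 p hp q hq)
  have hG0 : 0 ≤ G := (norm_nonneg _).trans (hG 1 h1M 1 h1N)
  calc ‖∑ m ∈ Icc 1 M, ∑ n ∈ Icc 1 N, a m n * (b m n : ℂ)‖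
      ≤ rectExt M N b 1 1 * G :=
        hsum ▸ norm_sum_Icc_sum_Icc_smul_le a _ hM hN (fun n => if_neg (by omega))
          (fun m => if_neg (by omega)) hf hG
    _ = b 1 1 * G := by rw [rectExt_of_le b hM hN]
    _ ≤ 5 * G * H := by nlinarith [hb0 1 h1M 1 h1N, hbH 1 h1M 1 h1N]
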